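/- Let n ≥ 1 and let I = [aπ/n, bπ/n] with integers a < b. If θ₀ ∉ I, then −1 ≤ ∫_I sin(2n(θ−θ₀))/(θ−θ₀) dθ ≤ 2. -/

import Mathlib

/-!
Substituting `x = 2n(θ - θ₀)` turns the integral into `∫ sin x / x` over an interval that does
not contain `0` in its interior, and since `sin x / x` is even we may take it inside `[0, ∞)`.
On `[0, π]` the integrand lies between `0` and `cos (x / 2)`, whose integral is at most `2`.
For `0 < a ≤ b`, integrating by parts and bounding `|cos| ≤ 1` gives
`(cos a - 1) / a ≤ ∫ x in a..b, sin x / x ≤ (cos a + 1) / a`: this is at most `2 / a ≤ 1` in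
absolute value when `a ≥ π`, and lies in `[-2 / π, 0]` when `a = π`, so the pieces starting
below `π` and above `π` together stay in `[-1, 2]`.
-/

open Real Set intervalIntegral MeasureTheory

lemma abs_sin_div_self_le_one (x : ℝ) : |sin x / x| ≤ 1 := by
  rcases eq_or_ne x 0 with rfl | hx
  · simp
  · rw [← sinc_of_ne_zero hx]
    exact abs_sinc_le_one x

lemma intervalIntegrable_sin_div_self (a b : ℝ) :
    IntervalIntegrable (fun x => sin x / x) volume a b :=
  intervalIntegrable_const.mono_fun' (measurable_sin.div measurable_id).aestronglyMeasurable
    (ae_of_all _ abs_sin_div_self_le_one)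

lemma integral_sin_div_self_comp_neg (a b : ℝ) :
    ∫ x in -b..-a, sin x / x = ∫ x in a..b, sin x / x := by
  rw [← integral_comp_neg]
  simp only [sin_neg, neg_div_neg_eq]

lemma integral_sin_mul_sub_div_sub (c θ₀ a b : ℝ) :
    ∫ θ in a..b, sin (c * (θ - θ₀)) / (θ - θ₀) =
      ∫ x in c * (a - θ₀)..c * (b - θ₀), sin x / x := by
  rw [integral_comp_sub_right (fun u => sin (c * u) / u), ← smul_integral_comp_mul_left,
    smul_eq_mul, ← intervalIntegral.integral_const_mul]
  congr 1 with u
  rcases eq_or_ne c 0 with rfl | hc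
  · simp
  · rw [mul_div_assoc', mul_div_mul_left _ _ hc]

lemma pos_of_mem_uIcc {a b x : ℝ} (ha : 0 < a) (hab : a ≤ b) (hx : x ∈ uIcc a b) : 0 < x := by
  rw [uIcc_of_le hab] at hx
  exact ha.trans_le hx.1

lemma integral_inv_sq_of_pos {a b : ℝ} (ha : 0 < a) (hab : a ≤ b) :
    ∫ x in a..b, (x ^ 2)⁻¹ = a⁻¹ - b⁻¹ := by
  have hpos : ∀ x ∈ uIcc a b, 0 < x := fun x => pos_of_mem_uIcc ha hab
  rw [integral_eq_sub_of_hasDerivAt (f := fun x => -x⁻¹)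
    (fun x hx => by simpa using (hasDerivAt_inv (hpos x hx).ne').fun_neg)]
  · ring
  · exact intervalIntegrable_inv (fun x hx => pow_ne_zero 2 (hpos x hx).ne') (by fun_prop)

lemma integral_sin_div_self_eq_of_pos {a b : ℝ} (ha : 0 < a) (hab : a ≤ b) :
    ∫ x in a..b, sin x / x = cos a / a - cos b / b - ∫ x in a..b, cos x / x ^ 2 := by
  have hpos : ∀ x ∈ uIcc a b, 0 < x := fun x => pos_of_mem_uIcc ha hab
  have hparts := integral_mul_deriv_eq_deriv_mul_of_hasDerivAt
    (u := fun x => x⁻¹) (v := fun x => -cos x) (u' := fun x => -(x ^ 2)⁻¹) (v' := sin)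
    (continuousOn_inv₀.mono fun x hx => (hpos x hx).ne') continuous_cos.neg.continuousOn
    (fun x hx => hasDerivAt_inv (hpos x (Ioo_subset_Icc_self hx)).ne')
    (fun x _ => by simpa using (hasDerivAt_cos x).fun_neg)
    (intervalIntegrable_inv (fun x hx => pow_ne_zero 2 (hpos x hx).ne') (by fun_prop)).neg
    (continuous_sin.intervalIntegrable a b)
  simp only [mul_neg, neg_mul, neg_neg] at hparts
  simp only [div_eq_inv_mul]
  linarith

lemma integral_sin_div_self_mem_Icc_of_pos {a b : ℝ} (ha : 0 < a) (hab : a ≤ b) :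
    ∫ x in a..b, sin x / x ∈ Icc ((cos a - 1) / a) ((cos a + 1) / a) := by
  have hb : 0 < b := ha.trans_le hab
  have hcos_div : |cos b / b| ≤ b⁻¹ := by
    rw [abs_div, abs_of_pos hb, div_eq_mul_inv]
    exact mul_le_of_le_one_left (inv_nonneg.2 hb.le) (abs_cos_le_one b)
  have hcos_div_sq : |∫ x in a..b, cos x / x ^ 2| ≤ a⁻¹ - b⁻¹ := by
    rw [← integral_inv_sq_of_pos ha hab, ← Real.norm_eq_abs]
    refine norm_integral_le_of_norm_le hab (ae_of_all _ fun x _ => ?_) ?_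
    · rw [Real.norm_eq_abs, abs_div, abs_sq, div_eq_mul_inv]
      exact mul_le_of_le_one_left (by positivity) (abs_cos_le_one x)
    · exact intervalIntegrable_inv (fun x hx => pow_ne_zero 2 (pos_of_mem_uIcc ha hab hx).ne')
        (by fun_prop)
  rw [integral_sin_div_self_eq_of_pos ha hab, mem_Icc, sub_div, add_div, one_div]
  obtain ⟨hlo, hhi⟩ := abs_le.1 hcos_div_sq
  obtain ⟨hlo', hhi'⟩ := abs_le.1 hcos_div
  constructor <;> linarith

lemma sin_div_self_le_cos_half {x : ℝ} (hx₀ : 0 ≤ x) (hxπ : x ≤ π) :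
    sin x / x ≤ cos (x / 2) := by
  rcases hx₀.eq_or_lt with rfl | hx
  · simp
  have hcos : 0 ≤ cos (x / 2) := cos_nonneg_of_mem_Icc ⟨by linarith [pi_pos], by linarith⟩
  rw [div_le_iff₀ hx]
  calc sin x = 2 * sin (x / 2) * cos (x / 2) := by rw [← sin_two_mul]; ring_nf
    _ ≤ 2 * (x / 2) * cos (x / 2) := by gcongr; exact sin_le (by linarith)
    _ = cos (x / 2) * x := by ring

lemma integral_sin_div_self_mem_Icc_of_le_pi {a b : ℝ} (ha : 0 ≤ a) (hab : a ≤ b) (hb : b ≤ π) :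
    ∫ x in a..b, sin x / x ∈ Icc 0 2 := by
  have hcos_half : ∫ x in a..b, cos (x / 2) = 2 * (sin (b / 2) - sin (a / 2)) := by
    simp [integral_comp_div, integral_cos]
  constructor
  · exact integral_nonneg hab fun x hx =>
      div_nonneg (sin_nonneg_of_nonneg_of_le_pi (ha.trans hx.1) (hx.2.trans hb)) (ha.trans hx.1)
  · calc ∫ x in a..b, sin x / x ≤ ∫ x in a..b, cos (x / 2) :=
          integral_mono_on hab (intervalIntegrable_sin_div_self a b)
            ((by fun_prop : Continuous fun x => cos (x / 2)).intervalIntegrable a b)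
            fun x hx => sin_div_self_le_cos_half (ha.trans hx.1) (hx.2.trans hb)
      _ = 2 * (sin (b / 2) - sin (a / 2)) := hcos_half
      _ ≤ 2 := by
        have := sin_nonneg_of_nonneg_of_le_pi (x := a / 2) (by linarith) (by linarith [pi_pos])
        linarith [sin_le_one (b / 2)]

lemma integral_sin_div_self_mem_Icc_of_nonneg {a b : ℝ} (ha : 0 ≤ a) (hab : a ≤ b) :
    ∫ x in a..b, sin x / x ∈ Icc (-1) 2 := by
  rcases le_total π a with hπa | haπ
  · have ha₀ : 0 < a := pi_pos.trans_le hπa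
    obtain ⟨hlo, hhi⟩ := integral_sin_div_self_mem_Icc_of_pos ha₀ hab
    constructor
    · refine le_trans ?_ hlo
      rw [le_div_iff₀ ha₀]
      linarith [neg_one_le_cos a, two_le_pi]
    · refine hhi.trans ?_
      rw [div_le_iff₀ ha₀]
      linarith [cos_le_one a, two_le_pi]
  rcases le_total b π with hbπ | hπb
  · exact Icc_subset_Icc (by norm_num) le_rfl (integral_sin_div_self_mem_Icc_of_le_pi ha hab hbπ)
  · obtain ⟨hlo₁, hhi₁⟩ := integral_sin_div_self_mem_Icc_of_le_pi ha haπ le_rfl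
    obtain ⟨hlo₂, hhi₂⟩ := integral_sin_div_self_mem_Icc_of_pos pi_pos hπb
    rw [cos_pi, neg_add_cancel, zero_div] at hhi₂
    have hlo₂_ge : -1 ≤ (cos π - 1) / π := by
      rw [cos_pi, le_div_iff₀ pi_pos]
      linarith [two_le_pi]
    rw [← integral_add_adjacent_intervals (intervalIntegrable_sin_div_self a π)
      (intervalIntegrable_sin_div_self π b)]
    constructor <;> linarith

lemma integral_sin_div_self_mem_Icc {a b : ℝ} (hab : a ≤ b) (h₀ : b ≤ 0 ∨ 0 ≤ a) :
    ∫ x in a..b, sin x / x ∈ Icc (-1) 2 := by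
  rcases h₀ with hb | ha
  · rw [← integral_sin_div_self_comp_neg]
    exact integral_sin_div_self_mem_Icc_of_nonneg (neg_nonneg.2 hb) (neg_le_neg hab)
  · exact integral_sin_div_self_mem_Icc_of_nonneg ha hab

theorem sine_integral_out_general (n : ℕ) (a b : ℤ) (hab : a < b) (θ₀ : ℝ)
    (hθ₀ : θ₀ ∉ Set.Icc (a * Real.pi / n) (b * Real.pi / n)) :
    (-1 : ℝ) ≤ (∫ θ in (a * Real.pi / n)..(b * Real.pi / n),
        Real.sin (2 * n * (θ - θ₀)) / (θ - θ₀)) ∧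
    (∫ θ in (a * Real.pi / n)..(b * Real.pi / n),
        Real.sin (2 * n * (θ - θ₀)) / (θ - θ₀)) ≤ 2 := by
  have h2n : (0 : ℝ) ≤ 2 * n := by positivity
  have hAB : (a * π / n : ℝ) ≤ b * π / n := by gcongr
  rw [integral_sin_mul_sub_div_sub]
  refine integral_sin_div_self_mem_Icc (mul_le_mul_of_nonneg_left (by linarith) h2n) ?_
  rw [mem_Icc, not_and_or, not_le, not_le] at hθ₀
  rcases hθ₀ with h | h
  · exact Or.inr (mul_nonneg h2n (by linarith))
  · exact Or.inl (mul_nonpos_of_nonneg_of_nonpos h2n (by linarith))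

theorem sine_integral_out (n : ℕ) (hn : 1 ≤ n) (a b : ℤ) (hab : a < b) (θ₀ : ℝ)
    (hθ₀ : θ₀ ∉ Set.Icc (a * Real.pi / n) (b * Real.pi / n)) :
    (-1 : ℝ) ≤ (∫ θ in (a * Real.pi / n)..(b * Real.pi / n),
        Real.sin (2 * n * (θ - θ₀)) / (θ - θ₀)) ∧
    (∫ θ in (a * Real.pi / n)..(b * Real.pi / n),
        Real.sin (2 * n * (θ - θ₀)) / (θ - θ₀)) ≤ 2 :=
  sine_integral_out_general n a b hab θ₀ hθ₀
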